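/- arXiv:1906.11093 — 6 statements merged into one kernel-verified Lean document; each statement's English description precedes it below -/
import Mathlib

section
/- No natural number m with m ≡ 1 (mod 4) or m ≡ 2 (mod 4) admits a t-squared partition for any t ≥ 1. -/
/-!
Since `c ^ 2 ≡ c (mod 2)`, the sums `S = ∑ cᵢ` and `Q = ∑ cᵢ ^ 2` have the same parity. Hence
`S ^ 2 + 2 Q ≡ 0 (mod 4)` when `S` is even and `≡ 1 + 2 = 3 (mod 4)` when `S` is odd.
-/

theorem Finset.sum_sq_mod_two {ι : Type*} (s : Finset ι) (c : ι → ℕ) :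
    (∑ i ∈ s, c i ^ 2) % 2 = (∑ i ∈ s, c i) % 2 := by
  rw [Finset.sum_nat_mod, Finset.sum_nat_mod s 2 c]
  congr 1
  refine Finset.sum_congr rfl fun i _ => ?_
  rcases Nat.mod_two_eq_zero_or_one (c i) with h | h <;> simp [Nat.pow_mod, h]

theorem Nat.sq_add_two_mul_mod_four {S Q : ℕ} (h : Q % 2 = S % 2) :
    (S ^ 2 + 2 * Q) % 4 = 0 ∨ (S ^ 2 + 2 * Q) % 4 = 3 := by
  rcases Nat.even_or_odd' S with ⟨k, rfl | rfl⟩ <;> ring_nf at h ⊢ <;> omega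

/-- No natural number congruent to 1 or 2 mod 4 admits a t-squared partition. -/
theorem stmt6 (m : ℕ) (hm : m % 4 = 1 ∨ m % 4 = 2) :
    ¬ ∃ (t : ℕ) (_ : 1 ≤ t) (c : Fin t → ℕ),
        (∀ i, 0 < c i) ∧ m = (∑ i, c i) ^ 2 + 2 * ∑ i, (c i) ^ 2 := by
  rintro ⟨t, -, c, -, rfl⟩
  have := Nat.sq_add_two_mul_mod_four (Finset.sum_sq_mod_two Finset.univ c)
  omega
end

section
/- The number of partitions of n into at least two parts equals the number of two-line matrices (c_1,...,c_s; 0, d_2,...,d_s) of nonnegative integers with d_1 = 0, c_s = 0, d_s ≠ 0, c_j = c_{j+1} + d_{j+1} for 1 ≤ j ≤ s-1, and total entry sum at most n. -/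
/-- A two-line matrix of class M, encoded as a list of columns (cᵢ, dᵢ):
nonempty, last column is (0, d) with d ≠ 0, and cⱼ = cⱼ₊₁ + dⱼ₊₁. -/
def IsMatM (l : List (ℕ × ℕ)) : Prop :=
  l ≠ [] ∧ (∃ d, d ≠ 0 ∧ l.getLast? = some (0, d)) ∧
    List.Chain' (fun p q => p.1 = q.1 + q.2) l

/-- The sum of all entries of the two-line matrix. -/
def entriesSum (l : List (ℕ × ℕ)) : ℕ := (l.map fun p => p.1 + p.2).sum

/-!
A matrix of class M is determined by its column sums `σⱼ = cⱼ + dⱼ`: the recursion gives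
`cⱼ = σⱼ₊₁` (with `σₛ₊₁ = 0`) and `dⱼ = σⱼ - σⱼ₊₁`. So the column sums of matrices in M are
exactly the weakly decreasing nonempty lists of positive integers, i.e. partitions, the entry sum
is the size of the partition, and `d₁ = 0` says that the two largest parts are equal.
A partition `λ₁ ≥ λ₂ ≥ ⋯` of `n` with at least two parts is sent to `λ₂ ≥ λ₂ ≥ λ₃ ≥ ⋯`, whose
size is at most `n`; conversely `λ₁` is recovered as `n` minus the sum of the other parts.
-/

open List

theorem List.sortedGE_cons_cons {α : Type*} [Preorder α] {x y : α} {t : List α} :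
    (x :: y :: t).SortedGE ↔ y ≤ x ∧ (y :: t).SortedGE := by
  simp only [sortedGE_iff_isChain, isChain_cons_cons, ge_iff_le]

theorem List.headD_le_of_sortedGE_cons {x : ℕ} {t : List ℕ} (h : (x :: t).SortedGE) :
    t.headD 0 ≤ x := by
  cases t with
  | nil => exact Nat.zero_le x
  | cons y t => exact (sortedGE_cons_cons.1 h).1

theorem List.exists_cons_cons_of_two_le_length {α : Type*} {l : List α} (h : 2 ≤ l.length) :
    ∃ x y t, l = x :: y :: t :=
  match l, h with
  | x :: y :: t, _ => ⟨x, y, t, rfl⟩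

theorem isMatM_iff {l : List (ℕ × ℕ)} : IsMatM l ↔ l ≠ [] ∧
    (∃ d, d ≠ 0 ∧ l.getLast? = some (0, d)) ∧ l.IsChain (fun p q => p.1 = q.1 + q.2) :=
  Iff.rfl

theorem isMatM_singleton {p : ℕ × ℕ} : IsMatM [p] ↔ p.1 = 0 ∧ p.2 ≠ 0 := by
  obtain ⟨a, b⟩ := p
  simp [isMatM_iff, and_comm]

theorem isMatM_cons_cons {p q : ℕ × ℕ} {t : List (ℕ × ℕ)} :
    IsMatM (p :: q :: t) ↔ p.1 = q.1 + q.2 ∧ IsMatM (q :: t) := by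
  simp only [isMatM_iff, isChain_cons_cons, getLast?_cons_cons, ne_eq, reduceCtorEq,
    not_false_eq_true, true_and]
  tauto

def colSums (l : List (ℕ × ℕ)) : List ℕ := l.map fun p => p.1 + p.2

@[simp]
theorem colSums_cons (p : ℕ × ℕ) (l : List (ℕ × ℕ)) :
    colSums (p :: l) = (p.1 + p.2) :: colSums l := rfl

def ofColSums : List ℕ → List (ℕ × ℕ)
  | [] => []
  | x :: t => (t.headD 0, x - t.headD 0) :: ofColSums t

theorem colSums_ofColSums : ∀ {σ : List ℕ}, σ.SortedGE → colSums (ofColSums σ) = σ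
  | [], _ => rfl
  | [x], _ => by simp [ofColSums, colSums]
  | x :: y :: t, h => by
    rw [sortedGE_cons_cons] at h
    rw [ofColSums, colSums_cons, colSums_ofColSums h.2]
    simp [Nat.add_sub_cancel' h.1]

theorem isMatM_ofColSums : ∀ {σ : List ℕ}, σ ≠ [] → σ.SortedGE → (∀ x ∈ σ, 0 < x) →
    IsMatM (ofColSums σ)
  | [x], _, _, hpos => isMatM_singleton.2 ⟨rfl, (hpos x (by simp)).ne'⟩
  | x :: y :: t, _, hs, hpos => by
    rw [sortedGE_cons_cons] at hs
    rw [ofColSums, ofColSums, isMatM_cons_cons, ← ofColSums]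
    refine ⟨(Nat.add_sub_cancel' (headD_le_of_sortedGE_cons hs.2)).symm, ?_⟩
    exact isMatM_ofColSums (cons_ne_nil y t) hs.2 fun z hz => hpos z (mem_cons_of_mem x hz)

namespace IsMatM

theorem ofColSums_colSums : ∀ {l : List (ℕ × ℕ)}, IsMatM l → ofColSums (colSums l) = l
  | [], h => absurd rfl h.1
  | [p], h => by simp [ofColSums, colSums, Prod.ext_iff, (isMatM_singleton.1 h).1]
  | p :: q :: t, h => by
    obtain ⟨hpq, hq⟩ := isMatM_cons_cons.1 h
    rw [colSums_cons, ofColSums, hq.ofColSums_colSums]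
    simp [Prod.ext_iff, hpq]

theorem sortedGE_colSums : ∀ {l : List (ℕ × ℕ)}, IsMatM l → (colSums l).SortedGE
  | [], _ => by simp [colSums, sortedGE_iff_isChain]
  | [p], _ => by simp [colSums, sortedGE_iff_isChain]
  | p :: q :: t, h => by
    obtain ⟨hpq, hq⟩ := isMatM_cons_cons.1 h
    rw [colSums_cons, colSums_cons, sortedGE_cons_cons, ← colSums_cons]
    exact ⟨by omega, hq.sortedGE_colSums⟩

theorem pos_of_mem_colSums : ∀ {l : List (ℕ × ℕ)}, IsMatM l → ∀ x ∈ colSums l, 0 < x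
  | [p], h => by simp [colSums, Nat.pos_of_ne_zero (isMatM_singleton.1 h).2]
  | p :: q :: t, h => by
    obtain ⟨hpq, hq⟩ := isMatM_cons_cons.1 h
    have hpos := hq.pos_of_mem_colSums
    rw [colSums_cons, forall_mem_cons]
    exact ⟨by have := hpos (q.1 + q.2) (by simp); omega, hpos⟩

theorem exists_head?_eq_iff_colSums_eq_cons_cons : ∀ {l : List (ℕ × ℕ)}, IsMatM l →
    ((∃ c, l.head? = some (c, 0)) ↔ ∃ a t, colSums l = a :: a :: t)
  | [p], h => by simp [colSums, Prod.ext_iff, (isMatM_singleton.1 h).2]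
  | p :: q :: t, h => by
    obtain ⟨hpq, -⟩ := isMatM_cons_cons.1 h
    simp [Prod.ext_iff]
    omega

end IsMatM

def colSumsEquiv : {l : List (ℕ × ℕ) // IsMatM l} ≃
    {σ : List ℕ // σ ≠ [] ∧ σ.SortedGE ∧ ∀ x ∈ σ, 0 < x} where
  toFun l := ⟨colSums l.1, by simpa [colSums] using l.2.1, l.2.sortedGE_colSums,
    l.2.pos_of_mem_colSums⟩
  invFun σ := ⟨ofColSums σ.1, isMatM_ofColSums σ.2.1 σ.2.2.1 σ.2.2.2⟩
  left_inv l := Subtype.ext l.2.ofColSums_colSums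
  right_inv σ := Subtype.ext (colSums_ofColSums σ.2.2.1)

def Nat.Partition.sortedPartsEquiv (n : ℕ) :
    n.Partition ≃ {σ : List ℕ // σ.SortedGE ∧ (∀ x ∈ σ, 0 < x) ∧ σ.sum = n} where
  toFun p := ⟨p.parts.sort (· ≥ ·), sortedGE_iff_pairwise.2 (Multiset.pairwise_sort _ _),
    fun _ hx => p.parts_pos ((Multiset.mem_sort _).1 hx),
    by rw [← Multiset.sum_coe, Multiset.sort_eq, p.parts_sum]⟩
  invFun σ := ⟨σ.1, σ.2.2.1 _, σ.2.2.2⟩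
  left_inv p := Nat.Partition.ext (Multiset.sort_eq _ _)
  right_inv σ := Subtype.ext (mergeSort_eq_self _ σ.2.1.pairwise)

def equalTopPartsEquiv (n : ℕ) :
    {σ : List ℕ // (σ.SortedGE ∧ (∀ x ∈ σ, 0 < x) ∧ σ.sum = n) ∧ 2 ≤ σ.length} ≃
    {σ : List ℕ // (σ ≠ [] ∧ σ.SortedGE ∧ ∀ x ∈ σ, 0 < x) ∧
      (∃ a t, σ = a :: a :: t) ∧ σ.sum ≤ n} where
  toFun σ := ⟨σ.1.tail.headD 0 :: σ.1.tail, by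
    obtain ⟨σ, ⟨hs, hpos, hsum⟩, hlen⟩ := σ
    obtain ⟨x, y, t, rfl⟩ := exists_cons_cons_of_two_le_length hlen
    rw [sortedGE_cons_cons] at hs
    simp only [sum_cons] at hsum
    refine ⟨⟨cons_ne_nil _ _, sortedGE_cons_cons.2 ⟨le_rfl, hs.2⟩,
      fun z hz => hpos z (mem_cons_of_mem x (by simpa using hz))⟩, ⟨y, t, rfl⟩, ?_⟩
    simp only [tail_cons, headD_cons, sum_cons]
    omega⟩
  invFun σ := ⟨(n - σ.1.tail.sum) :: σ.1.tail, by
    obtain ⟨σ, ⟨-, hs, hpos⟩, ⟨a, t, rfl⟩, hsum⟩ := σ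
    rw [sortedGE_cons_cons] at hs
    simp only [sum_cons] at hsum
    have ha := hpos a mem_cons_self
    simp only [tail_cons, sum_cons]
    refine ⟨⟨sortedGE_cons_cons.2 ⟨by omega, hs.2⟩, forall_mem_cons.2 ⟨by omega,
      fun z hz => hpos z (mem_cons_of_mem a hz)⟩, by omega⟩, by simp⟩⟩
  left_inv σ := by
    obtain ⟨σ, ⟨-, -, hsum⟩, hlen⟩ := σ
    obtain ⟨x, y, t, rfl⟩ := exists_cons_cons_of_two_le_length hlen
    simp only [sum_cons] at hsum
    simp only [tail_cons, sum_cons, Subtype.mk.injEq, cons.injEq, and_true]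
    omega
  right_inv σ := by
    obtain ⟨σ, -, ⟨a, t, rfl⟩, -⟩ := σ
    simp

/-- The number of partitions of n into at least two parts equals the number of
matrices in M with d₁ = 0 and total entry sum at most n. -/
theorem stmt10 (n : ℕ) :
    Nat.card {p : Nat.Partition n // 2 ≤ Multiset.card p.parts} =
      Nat.card {l : List (ℕ × ℕ) // IsMatM l ∧
        (∃ c, l.head? = some (c, 0)) ∧ entriesSum l ≤ n} := by
  have hparts : Nat.card {p : n.Partition // 2 ≤ Multiset.card p.parts} =
      Nat.card {σ : List ℕ // (σ.SortedGE ∧ (∀ x ∈ σ, 0 < x) ∧ σ.sum = n) ∧ 2 ≤ σ.length} :=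
    Nat.card_congr <| ((Nat.Partition.sortedPartsEquiv n).subtypeEquiv fun p => by
      simp [Nat.Partition.sortedPartsEquiv]).trans (Equiv.subtypeSubtypeEquivSubtypeInter _ _)
  have hmatrices : Nat.card {l // IsMatM l ∧ (∃ c, l.head? = some (c, 0)) ∧ entriesSum l ≤ n} =
      Nat.card {σ : List ℕ // (σ ≠ [] ∧ σ.SortedGE ∧ ∀ x ∈ σ, 0 < x) ∧
        (∃ a t, σ = a :: a :: t) ∧ σ.sum ≤ n} :=
    Nat.card_congr <| (Equiv.subtypeSubtypeEquivSubtypeInter _ _).symm.trans <|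
      (colSumsEquiv.subtypeEquiv fun l =>
        and_congr l.2.exists_head?_eq_iff_colSums_eq_cons_cons Iff.rfl).trans
          (Equiv.subtypeSubtypeEquivSubtypeInter _ _)
  rw [hparts, hmatrices]
  exact Nat.card_congr (equalTopPartsEquiv n)
end

section
/- Every number m arising from the Path Procedure applied to a matrix associated with a partition of n satisfies m ≤ n^2 - 1; equivalently, if c_1 ≥ ... ≥ c_t ≥ 1 with 2c_1 + c_2 + ... + c_t ≤ n, then (c_1+...+c_t)^2 + 2(c_1^2+...+c_t^2) ≤ n^2 - 1. -/
/-! Every `cᵢ` is at most `c₁`, so `∑ cᵢ² ≤ c₁ ∑ cᵢ` and hence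
`m + c₁² ≤ (c₁ + ∑ cᵢ)² ≤ n²`; since `c₁ ≥ 1` this gives `m ≤ n² - 1`. -/

theorem Finset.sum_sq_le_mul_sum {ι R : Type*} [Semiring R] [PartialOrder R]
    [IsOrderedRing R] {s : Finset ι} {f : ι → R} {M : R} (hf : ∀ i ∈ s, 0 ≤ f i)
    (hM : ∀ i ∈ s, f i ≤ M) : ∑ i ∈ s, f i ^ 2 ≤ M * ∑ i ∈ s, f i := by
  rw [Finset.mul_sum]
  refine Finset.sum_le_sum fun i hi => ?_
  rw [sq]
  exact mul_le_mul_of_nonneg_right (hM i hi) (hf i hi)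

/-- If c₁ ≥ ⋯ ≥ c_t ≥ 1 and 2c₁ + c₂ + ⋯ + c_t ≤ n, then the Path Procedure
value m = (Σcᵢ)² + 2Σcᵢ² satisfies m ≤ n² - 1. -/
theorem stmt13 (n t : ℕ) (ht : 0 < t) (c : Fin t → ℕ) (hpos : ∀ i, 1 ≤ c i)
    (hdec : Antitone c) (hn : c ⟨0, ht⟩ + (∑ i, c i) ≤ n) :
    (∑ i, c i) ^ 2 + 2 * ∑ i, (c i) ^ 2 ≤ n ^ 2 - 1 := by
  set c₁ := c ⟨0, ht⟩
  set S := ∑ i, c i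
  have hsq : ∑ i, c i ^ 2 ≤ c₁ * S :=
    Finset.sum_sq_le_mul_sum (fun _ _ => Nat.zero_le _)
      fun _ _ => hdec (Fin.mk_le_of_le_val (Nat.zero_le _))
  have hc₁ : 1 ≤ c₁ ^ 2 := Nat.one_le_pow _ _ (hpos _)
  have : S ^ 2 + 2 * ∑ i, c i ^ 2 + 1 ≤ n ^ 2 :=
    calc S ^ 2 + 2 * ∑ i, c i ^ 2 + 1 ≤ S ^ 2 + 2 * (c₁ * S) + c₁ ^ 2 := by gcongr
      _ = (c₁ + S) ^ 2 := by ring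
      _ ≤ n ^ 2 := Nat.pow_le_pow_left hn 2
  omega
end

section
/- For every n ≥ 1, p(n) = 1 + Σ_{m=1}^{n^2-1} |B_n(m)|, where B_n(m) is the set of weakly decreasing tuples (c_1 ≥ c_2 ≥ ... ≥ c_t ≥ 1) of positive integers with (c_1+...+c_t)^2 + 2(c_1^2+...+c_t^2) = m and (c_1+...+c_t) + c_1 ≤ n, and p(n) is the number of partitions of n. -/
/-- A weakly decreasing tuple of positive integers, encoded as a list, in the
set Bₙ(m): it represents m as a t-squared partition and b + c₁ ≤ n. -/
def memB (n m : ℕ) (c : List ℕ) : Prop :=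
  c ≠ [] ∧ c.Pairwise (· ≥ ·) ∧ (∀ x ∈ c, 0 < x) ∧
    c.sum ^ 2 + 2 * (c.map fun x => x ^ 2).sum = m ∧ c.sum + c.head! ≤ n

/-!
Sorting the parts of a partition of `n` decreasingly and removing the largest part `a` is a
bijection onto the decreasing lists `c` of positive integers with `c.sum + c.head! ≤ n`, since the
only constraint on the removed part is `a = n - c.sum ≥ c.head!`. The empty list accounts for the
partition `(n)`; a nonempty `c` lies in `Bₙ(m)` for `m = b² + 2 ∑ cᵢ²`, and this `m` lies in
`[1, n² - 1]` because `∑ cᵢ² ≤ c₁ b` gives `m < (b + c₁)² ≤ n²`.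
-/

theorem Set.ncard_eq_sum_ncard_fiberwise {α β : Type*} [DecidableEq β] {S : Set α}
    (hS : S.Finite) {f : α → β} {t : Finset β} (H : S.MapsTo f t) :
    S.ncard = ∑ b ∈ t, {a ∈ S | f a = b}.ncard := by
  classical
  lift S to Finset α using hS
  rw [Set.ncard_coe_finset, Finset.card_eq_sum_card_fiberwise H]
  refine Finset.sum_congr rfl fun b _ => ?_
  rw [← Set.ncard_coe_finset, Finset.coe_filter]
  rfl

theorem Multiset.sort_coe_of_pairwise {α : Type*} {r : α → α → Prop} [DecidableRel r]
    [IsTrans α r] [Std.Antisymm r] [Std.Total r] {l : List α} (hl : l.Pairwise r) :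
    Multiset.sort (l : Multiset α) r = l :=
  List.mergeSort_eq_self _ hl

namespace TSquared

def value (c : List ℕ) : ℕ := c.sum ^ 2 + 2 * (c.map fun x => x ^ 2).sum

theorem sum_sq_le_head_mul_sum {c : List ℕ} (hc : c.Pairwise (· ≥ ·)) :
    (c.map fun x => x ^ 2).sum ≤ c.head! * c.sum := by
  calc (c.map fun x => x ^ 2).sum ≤ (c.map fun x => c.head! * x).sum :=
        List.sum_le_sum fun x hx => by
          rw [sq]; exact Nat.mul_le_mul_right x (hc.head!_le hx)
    _ = c.head! * c.sum := by rw [List.sum_map_mul_left, List.map_id']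

theorem value_mem_Icc {n : ℕ} {c : List ℕ} (hne : c ≠ []) (hc : c.Pairwise (· ≥ ·))
    (hpos : ∀ x ∈ c, 0 < x) (hn : c.sum + c.head! ≤ n) : value c ∈ Finset.Icc 1 (n ^ 2 - 1) := by
  have hhead : 0 < c.head! := hpos _ (List.head!_mem_self hne)
  have hsum : c.head! ≤ c.sum := List.le_sum_of_mem (List.head!_mem_self hne)
  have hsq := sum_sq_le_head_mul_sum hc
  have hlt : value c < (c.sum + c.head!) ^ 2 := by unfold value; nlinarith
  have hle : (c.sum + c.head!) ^ 2 ≤ n ^ 2 := Nat.pow_le_pow_left hn 2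
  refine Finset.mem_Icc.2 ⟨?_, by omega⟩
  have hone : 1 ≤ c.sum ^ 2 := Nat.one_le_pow _ _ (by omega)
  unfold value
  omega

/-- Decreasing lists of positive integers that can follow a largest part in a partition of `n`. -/
def tails (n : ℕ) : Set (List ℕ) :=
  {c | c.Pairwise (· ≥ ·) ∧ (∀ x ∈ c, 0 < x) ∧ c.sum + c.head! ≤ n}

theorem memB_iff {n m : ℕ} {c : List ℕ} : memB n m c ↔ c ∈ tails n \ {[]} ∧ value c = m := by
  simp only [memB, tails, value, Set.mem_sdiff, Set.mem_ofPred_eq, Set.mem_singleton_iff]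
  tauto

theorem sort_cons_eq {α : Type*} [LinearOrder α] [Inhabited α] {a : α} {c : List α}
    (hc : c.Pairwise (· ≥ ·)) (ha : c.head! ≤ a) :
    Multiset.sort (a ::ₘ (c : Multiset α)) (· ≥ ·) = a :: c := by
  rw [Multiset.sort_cons _ _ _ fun b hb => (hc.head!_le hb : b ≤ c.head!).trans ha,
    Multiset.sort_coe_of_pairwise hc]

theorem head!_le_of_pairwise_cons {a : ℕ} {c : List ℕ} (h : (a :: c).Pairwise (· ≥ ·)) :
    c.head! ≤ a := by
  cases c with
  | nil => simp
  | cons b c => simpa using (List.pairwise_cons.1 h).1 b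

theorem tail_mem_tails {l : List ℕ} (hl : l.Pairwise (· ≥ ·)) (hpos : ∀ x ∈ l, 0 < x) :
    l.tail ∈ tails l.sum := by
  cases l with
  | nil => simp [tails]
  | cons a c =>
    have ha := head!_le_of_pairwise_cons hl
    refine ⟨hl.of_cons, fun x hx => hpos x (List.mem_cons_of_mem a hx), ?_⟩
    simp only [List.tail_cons, List.sum_cons]
    omega

def consPartition {n : ℕ} (hn : 1 ≤ n) (c : tails n) : n.Partition where
  parts := (n - c.1.sum) ::ₘ (c.1 : Multiset ℕ)
  parts_pos := by
    obtain ⟨c, -, hpos, hle⟩ := c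
    intro i hi
    rcases Multiset.mem_cons.1 hi with rfl | hi
    · cases c with
      | nil => simp only [List.sum_nil]; omega
      | cons a c =>
        have := hpos a List.mem_cons_self
        simp only [List.head!_cons, List.sum_cons] at hle ⊢
        omega
    · exact hpos i hi
  parts_sum := by
    have := c.2.2.2
    simp only [Multiset.sum_cons, Multiset.sum_coe]
    omega

def partitionEquivTails {n : ℕ} (hn : 1 ≤ n) : n.Partition ≃ tails n where
  toFun p := ⟨(p.parts.sort (· ≥ ·)).tail, by
    simpa [← Multiset.sum_coe, p.parts_sum] using
      tail_mem_tails (Multiset.pairwise_sort p.parts (· ≥ ·))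
        fun x hx => p.parts_pos ((Multiset.mem_sort _).1 hx)⟩
  invFun := consPartition hn
  left_inv p := by
    ext1
    obtain ⟨l, hl⟩ : ∃ l, p.parts.sort (· ≥ ·) = l := ⟨_, rfl⟩
    have hsum : l.sum = n := by rw [← hl, ← Multiset.sum_coe, Multiset.sort_eq, p.parts_sum]
    have hparts : (l : Multiset ℕ) = p.parts := by rw [← hl, Multiset.sort_eq]
    rcases l with _ | ⟨a, c⟩
    · simp only [List.sum_nil] at hsum; omega
    · show (n - (p.parts.sort (· ≥ ·)).tail.sum) ::ₘ ((p.parts.sort (· ≥ ·)).tail : Multiset ℕ)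
        = p.parts
      rw [hl, ← hparts, List.tail_cons, ← Multiset.cons_coe]
      simp only [List.sum_cons] at hsum
      congr 1
      omega
  right_inv c := by
    obtain ⟨hc, -, hle⟩ := c.2
    ext1
    simp only [consPartition]
    rw [sort_cons_eq hc (by omega), List.tail_cons]

end TSquared

open TSquared in
/-- Main Theorem: p(n) = 1 + Σ_{m=1}^{n²-1} |Bₙ(m)|. -/
theorem stmt16 (n : ℕ) (hn : 1 ≤ n) :
    Fintype.card (Nat.Partition n) =
      1 + ∑ m ∈ Finset.Icc 1 (n ^ 2 - 1), Nat.card {c : List ℕ // memB n m c} := by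
  have hequiv := partitionEquivTails hn
  have hfin : (tails n).Finite := Set.finite_coe_iff.1 (.of_equiv _ hequiv)
  have hnil : [] ∈ tails n := by simp [tails]
  have hvalue : (tails n \ {[]}).MapsTo value (Finset.Icc 1 (n ^ 2 - 1)) :=
    fun c ⟨⟨hc, hpos, hle⟩, hne⟩ => value_mem_Icc hne hc hpos hle
  calc Fintype.card n.Partition = (tails n).ncard := by
        rw [← Nat.card_eq_fintype_card, Nat.card_congr hequiv, Nat.card_coe_set_eq]
    _ = 1 + (tails n \ {[]}).ncard := by
        rw [← Set.ncard_sdiff_singleton_add_one hnil hfin, add_comm]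
    _ = 1 + ∑ m ∈ Finset.Icc 1 (n ^ 2 - 1), {c ∈ tails n \ {[]} | value c = m}.ncard := by
        rw [Set.ncard_eq_sum_ncard_fiberwise hfin.sdiff hvalue]
    _ = _ := by
        simp_rw [← memB_iff]
        rfl
end

section
/- The number of partitions of n equals 1 plus the number of weakly decreasing tuples (c_1 ≥ c_2 ≥ ... ≥ c_t ≥ 1) of positive integers (over all t ≥ 1) satisfying 2c_1 + c_2 + ... + c_t ≤ n. -/
/-!
List the parts of a partition of `n` in decreasing order as `a :: c`. Dropping the largest part
`a` is a bijection from the partitions with at least two parts onto the admissible tuples `c`: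
`a = n - c.sum` is recovered from `c`, and `a ≥ c.head!` is exactly `c.head! + c.sum ≤ n`.
The one remaining partition is the one with at most one part.
-/

theorem Nat.card_subtype_eq_card_and_add_card_and_not {α : Type*} (p q : α → Prop)
    [Finite {a // p a}] :
    Nat.card {a // p a} = Nat.card {a // p a ∧ q a} + Nat.card {a // p a ∧ ¬q a} := by
  classical
  rw [← Nat.card_congr (Equiv.subtypeSubtypeEquivSubtypeInter p q),
    ← Nat.card_congr (Equiv.subtypeSubtypeEquivSubtypeInter p (¬q ·)), ← Nat.card_sum,
    Nat.card_congr (Equiv.sumCompl _)]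

def IsPartitionList (n : ℕ) (l : List ℕ) : Prop :=
  l.Pairwise (· ≥ ·) ∧ (∀ x ∈ l, 0 < x) ∧ l.sum = n

def Nat.Partition.equivPartitionList (n : ℕ) : n.Partition ≃ {l // IsPartitionList n l} where
  toFun p := ⟨p.parts.sort (· ≥ ·), p.parts.pairwise_sort _,
    fun _ hx => p.parts_pos ((p.parts.mem_sort _).1 hx),
    by rw [← Multiset.sum_coe, Multiset.sort_eq, p.parts_sum]⟩
  invFun l := ⟨l.1, fun hx => l.2.2.1 _ hx, by simpa using l.2.2.2⟩
  left_inv p := Nat.Partition.ext (Multiset.sort_eq _ _)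
  right_inv l := Subtype.ext (List.mergeSort_eq_self _ l.2.1)

namespace IsPartitionList

variable {n : ℕ} {l : List ℕ}

theorem eq_of_tail_eq_nil {l' : List ℕ} (hl : IsPartitionList n l) (hl' : IsPartitionList n l')
    (h : l.tail = []) (h' : l'.tail = []) : l = l' := by
  obtain ⟨-, hpos, hsum⟩ := hl
  obtain ⟨-, hpos', hsum'⟩ := hl'
  rcases l with _ | ⟨a, _⟩ <;> rcases l' with _ | ⟨b, _⟩ <;> subst_vars <;> simp_all

theorem existsUnique_tail_eq_nil (n : ℕ) : ∃! l, IsPartitionList n l ∧ l.tail = [] := by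
  have hl : IsPartitionList n (if n = 0 then [] else [n]) := by
    split_ifs with hn <;> simp [IsPartitionList, hn, Nat.pos_of_ne_zero]
  have htail : (if n = 0 then [] else [n]).tail = [] := by split_ifs <;> rfl
  exact ⟨_, ⟨hl, htail⟩, fun l h => h.1.eq_of_tail_eq_nil hl h.2 htail⟩

theorem head!_tail_add_sum_tail_le (hl : IsPartitionList n l) (h : l.tail ≠ []) :
    l.tail.head! + l.tail.sum ≤ n := by
  obtain ⟨hdec, -, hsum⟩ := hl
  rcases l with _ | ⟨a, t⟩
  · simp at h
  · have : t.head! ≤ a := (List.pairwise_cons.1 hdec).1 _ (List.head!_mem_self h)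
    simp only [List.tail_cons, List.sum_cons] at hsum ⊢
    omega

theorem cons_sub_sum {c : List ℕ} (hc : c ≠ []) (hdec : c.Pairwise (· ≥ ·))
    (hpos : ∀ x ∈ c, 0 < x) (hle : c.head! + c.sum ≤ n) :
    IsPartitionList n ((n - c.sum) :: c) := by
  have hhead := hpos _ (List.head!_mem_self hc)
  refine ⟨List.pairwise_cons.2 ⟨fun x hx => ?_, hdec⟩, ?_, ?_⟩
  · have := hdec.head!_le hx
    omega
  · simp only [List.mem_cons, forall_eq_or_imp]
    exact ⟨by omega, hpos⟩
  · simp only [List.sum_cons]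
    omega

def tailEquiv (n : ℕ) :
    {l // IsPartitionList n l ∧ l.tail ≠ []} ≃
      {c : List ℕ // c ≠ [] ∧ c.Pairwise (· ≥ ·) ∧ (∀ x ∈ c, 0 < x) ∧
        c.head! + c.sum ≤ n} where
  toFun l := ⟨l.1.tail, l.2.2, l.2.1.1.tail, fun _ hx => l.2.1.2.1 _ (List.mem_of_mem_tail hx),
    l.2.1.head!_tail_add_sum_tail_le l.2.2⟩
  invFun c := ⟨(n - c.1.sum) :: c.1, cons_sub_sum c.2.1 c.2.2.1 c.2.2.2.1 c.2.2.2.2, c.2.1⟩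
  left_inv := by
    rintro ⟨_ | ⟨a, t⟩, ⟨-, -, hsum⟩, h⟩
    · simp at h
    · simp only [List.sum_cons] at hsum
      simp only [List.tail_cons, Subtype.mk.injEq, List.cons.injEq, and_true]
      omega
  right_inv _ := rfl

end IsPartitionList

/-- The number of partitions of n equals 1 plus the number of weakly decreasing
tuples c₁ ≥ ⋯ ≥ c_t ≥ 1 of positive integers with 2c₁ + c₂ + ⋯ + c_t ≤ n. -/
theorem stmt17 (n : ℕ) :
    Fintype.card (Nat.Partition n) =
      1 + Nat.card {c : List ℕ // c ≠ [] ∧ c.Pairwise (· ≥ ·) ∧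
        (∀ x ∈ c, 0 < x) ∧ c.head! + c.sum ≤ n} := by
  have : Finite {l // IsPartitionList n l} := .of_equiv _ (Nat.Partition.equivPartitionList n)
  obtain ⟨_⟩ :=
    (unique_subtype_iff_existsUnique _).2 (IsPartitionList.existsUnique_tail_eq_nil n)
  rw [← Nat.card_eq_fintype_card, Nat.card_congr (Nat.Partition.equivPartitionList n),
    Nat.card_subtype_eq_card_and_add_card_and_not _ (fun l : List ℕ => l.tail = []),
    Nat.card_unique, Nat.card_congr (IsPartitionList.tailEquiv n)]
end

section
/- For each m that is the value of the Path Procedure, the frequency f(m) — the number of matrices M in M_0 with P(M) = m — is finite, being bounded above by the number of partitions of m into distinct odd parts. -/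
/-!
For a weakly decreasing list `c` of positive integers with `n = c.sum`, repeating each part `x`
exactly `x` times gives a weakly decreasing sequence `μ₀ ≥ … ≥ μₙ₋₁` with sum `Σ x²`. Adding the
staircase `n - 1, …, 1, 0` makes it strictly decreasing, so the numbers `2 (μⱼ + n - 1 - j) + 1`
are `n` distinct odd parts with total `2 Σ x² + n²`. Both steps can be undone (the first because
all parts are positive), so this is an injection into partitions of `m` into distinct odd parts.
-/

namespace TSquaredPartition

def selfReplicate (c : List ℕ) : List ℕ := c.flatMap fun x => List.replicate x x

@[simp] lemma selfReplicate_cons (a : ℕ) (t : List ℕ) :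
    selfReplicate (a :: t) = List.replicate a a ++ selfReplicate t := rfl

lemma length_selfReplicate (c : List ℕ) : (selfReplicate c).length = c.sum := by
  induction c with
  | nil => rfl
  | cons a t ih => simp [ih]

lemma sum_selfReplicate (c : List ℕ) : (selfReplicate c).sum = (c.map fun x => x ^ 2).sum := by
  induction c with
  | nil => rfl
  | cons a t ih => simp [ih, sq]

lemma pairwise_selfReplicate {c : List ℕ} (h : c.Pairwise (· ≥ ·)) :
    (selfReplicate c).Pairwise (· ≥ ·) := by
  rw [selfReplicate, List.pairwise_flatMap]
  refine ⟨fun a _ => List.pairwise_replicate.mpr (Or.inr le_rfl), h.imp ?_⟩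
  intro a b hab x hx y hy
  rw [List.eq_of_mem_replicate hx, List.eq_of_mem_replicate hy]
  exact hab

lemma head?_selfReplicate {c : List ℕ} (hc : ∀ x ∈ c, 0 < x) :
    (selfReplicate c).head? = c.head? := by
  cases c with
  | nil => rfl
  | cons a t =>
    obtain ⟨k, rfl⟩ := Nat.exists_eq_add_one_of_ne_zero (hc a List.mem_cons_self).ne'
    simp [List.replicate_succ]

lemma selfReplicate_injOn : Set.InjOn selfReplicate {c | ∀ x ∈ c, 0 < x} := by
  intro c₁ hc₁ c₂ hc₂ h
  induction c₁ generalizing c₂ with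
  | nil =>
    have hhead := congrArg List.head? h
    rw [head?_selfReplicate hc₂] at hhead
    exact (List.head?_eq_none_iff.mp hhead.symm).symm
  | cons a t ih =>
    have hhead := congrArg List.head? h
    rw [head?_selfReplicate hc₁, head?_selfReplicate hc₂] at hhead
    cases c₂ with
    | nil => simp at hhead
    | cons b t₂ =>
      obtain rfl : a = b := by simpa using hhead
      rw [selfReplicate_cons, selfReplicate_cons, List.append_cancel_left_eq] at h
      rw [ih (fun x hx => hc₁ x (List.mem_cons_of_mem a hx))
        (fun x hx => hc₂ x (List.mem_cons_of_mem a hx)) h]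

def stagger : List ℕ → List ℕ
  | [] => []
  | a :: t => (2 * (a + t.length) + 1) :: stagger t

@[simp] lemma length_stagger (l : List ℕ) : (stagger l).length = l.length := by
  induction l with
  | nil => rfl
  | cons a t ih => simp [stagger, ih]

lemma sum_stagger (l : List ℕ) : (stagger l).sum = 2 * l.sum + l.length ^ 2 := by
  induction l with
  | nil => rfl
  | cons a t ih => simp only [stagger, List.sum_cons, ih, List.length_cons]; ring

lemma mem_stagger {l : List ℕ} {y : ℕ} (hy : y ∈ stagger l) :
    ∃ b ∈ l, ∃ k < l.length, y = 2 * (b + k) + 1 := by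
  induction l with
  | nil => simp [stagger] at hy
  | cons a t ih =>
    rcases List.mem_cons.mp hy with rfl | hy
    · exact ⟨a, List.mem_cons_self, t.length, by simp, rfl⟩
    · obtain ⟨b, hb, k, hk, rfl⟩ := ih hy
      exact ⟨b, List.mem_cons_of_mem a hb, k, by simp; omega, rfl⟩

lemma odd_of_mem_stagger {l : List ℕ} {y : ℕ} (hy : y ∈ stagger l) : Odd y := by
  obtain ⟨b, -, k, -, rfl⟩ := mem_stagger hy
  exact odd_two_mul_add_one _

lemma pairwise_stagger {l : List ℕ} (h : l.Pairwise (· ≥ ·)) :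
    (stagger l).Pairwise (· > ·) := by
  induction l with
  | nil => exact List.Pairwise.nil
  | cons a t ih =>
    rw [List.pairwise_cons] at h
    refine List.pairwise_cons.mpr ⟨fun y hy => ?_, ih h.2⟩
    obtain ⟨b, hb, k, hk, rfl⟩ := mem_stagger hy
    have := h.1 b hb
    omega

lemma stagger_injective : Function.Injective stagger := by
  intro l₁ l₂ h
  induction l₁ generalizing l₂ with
  | nil => simpa [stagger] using (congrArg List.length h).symm
  | cons a t ih =>
    cases l₂ with
    | nil => simp [stagger] at h
    | cons b t₂ =>
      simp only [stagger, List.cons.injEq] at h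
      have hlen : t.length = t₂.length := by simpa using congrArg List.length h.2
      rw [show a = b by omega, ih h.2]

def oddParts (c : List ℕ) : Multiset ℕ := stagger (selfReplicate c)

lemma sum_oddParts (c : List ℕ) :
    (oddParts c).sum = c.sum ^ 2 + 2 * (c.map fun x => x ^ 2).sum := by
  rw [oddParts, Multiset.sum_coe, sum_stagger, sum_selfReplicate, length_selfReplicate, add_comm]

lemma odd_of_mem_oddParts {c : List ℕ} {y : ℕ} (hy : y ∈ oddParts c) : Odd y :=
  odd_of_mem_stagger (Multiset.mem_coe.mp hy)

lemma nodup_oddParts {c : List ℕ} (h : c.Pairwise (· ≥ ·)) : (oddParts c).Nodup :=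
  Multiset.coe_nodup.mpr (pairwise_stagger (pairwise_selfReplicate h)).nodup

lemma oddParts_injOn :
    Set.InjOn oddParts {c | c.Pairwise (· ≥ ·) ∧ ∀ x ∈ c, 0 < x} := by
  intro c₁ ⟨hs₁, hp₁⟩ c₂ ⟨hs₂, hp₂⟩ h
  have hperm := Multiset.coe_eq_coe.mp h
  refine selfReplicate_injOn hp₁ hp₂ (stagger_injective ?_)
  exact hperm.eq_of_pairwise' (pairwise_stagger (pairwise_selfReplicate hs₁))
    (pairwise_stagger (pairwise_selfReplicate hs₂))

end TSquaredPartition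

open TSquaredPartition

/-- The frequency f(m) — the number of representations of m as a t-squared
partition, i.e. of matrices in M₀ with P(M) = m — is finite, bounded above by
the number of partitions of m into distinct odd parts. -/
theorem stmt18 (m : ℕ) :
    {c : List ℕ | c ≠ [] ∧ c.Pairwise (· ≥ ·) ∧ (∀ x ∈ c, 0 < x) ∧
        c.sum ^ 2 + 2 * (c.map fun x => x ^ 2).sum = m}.Finite ∧
      {c : List ℕ | c ≠ [] ∧ c.Pairwise (· ≥ ·) ∧ (∀ x ∈ c, 0 < x) ∧
        c.sum ^ 2 + 2 * (c.map fun x => x ^ 2).sum = m}.ncard ≤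
      Nat.card {p : Nat.Partition m // p.parts.Nodup ∧ ∀ x ∈ p.parts, Odd x} := by
  set S := {c : List ℕ | c ≠ [] ∧ c.Pairwise (· ≥ ·) ∧ (∀ x ∈ c, 0 < x) ∧
    c.sum ^ 2 + 2 * (c.map fun x => x ^ 2).sum = m}
  let F : S → {p : Nat.Partition m // p.parts.Nodup ∧ ∀ x ∈ p.parts, Odd x} := fun c =>
    ⟨⟨oddParts c, fun hy => (odd_of_mem_oddParts hy).pos, (sum_oddParts c).trans c.2.2.2.2⟩,
      nodup_oddParts c.2.2.1, fun _ => odd_of_mem_oddParts⟩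
  have hF : Function.Injective F := fun c₁ c₂ h =>
    Subtype.ext (oddParts_injOn ⟨c₁.2.2.1, c₁.2.2.2.1⟩ ⟨c₂.2.2.1, c₂.2.2.2.1⟩
      (congrArg (fun p => p.1.parts) h))
  have : Finite S := Finite.of_injective F hF
  exact ⟨S.toFinite, (Nat.card_coe_set_eq S).symm.trans_le (Nat.card_le_card_of_injective F hF)⟩
end
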